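/- arXiv:2212.12345 — 2 statements merged into one kernel-verified Lean document; each statement's English description precedes it below -/
import Mathlib

section
/- Let λ : [t_l, t_u] → ℝ be continuous with λ(t) = exp(β_i + β_j - d(t)) where d(t) ≥ 0 for all t, and suppose the probability of zero events of an inhomogeneous Poisson process with intensity λ on [t_l, t_u] is p⁰ = exp(-∫_{t_l}^{t_u} λ(t) dt), with 0 < p⁰ < 1. Then (1/(t_u - t_l)) ∫_{t_l}^{t_u} d(t) dt ≥ log((t_u - t_l)/(-log p⁰)) + β_i + β_j. -/
/-!
Since `-log p⁰ = exp (βᵢ + βⱼ) * ∫ exp (-d)`, the claim is Jensen's inequality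
`exp (-⨍ d) ≤ ⨍ exp (-d)` for the convex function `exp`, after taking logarithms.
-/

open Real MeasureTheory intervalIntegral Set

theorem ConvexOn.map_intervalAverage_le {g f : ℝ → ℝ} {a b : ℝ}
    (hg : ConvexOn ℝ univ g) (hgc : Continuous g) (hab : a ≠ b)
    (hf : IntervalIntegrable f volume a b) (hgf : IntervalIntegrable (g ∘ f) volume a b) :
    g (⨍ x in a..b, f x) ≤ ⨍ x in a..b, g (f x) :=
  hg.map_set_average_le hgc.continuousOn isClosed_univ
    (by simpa [Real.volume_uIoc, sub_eq_zero] using hab.symm) (by simp [Real.volume_uIoc])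
    (ae_of_all _ fun _ ↦ mem_univ _) (intervalIntegrable_iff.mp hf)
    (intervalIntegrable_iff.mp hgf)

theorem log_div_integral_exp_neg_le_intervalAverage {f : ℝ → ℝ} {a b : ℝ} (hab : a < b)
    (hf : IntervalIntegrable f volume a b)
    (hexp : IntervalIntegrable (fun x ↦ exp (-f x)) volume a b) :
    log ((b - a) / ∫ x in a..b, exp (-f x)) ≤ ⨍ x in a..b, f x := by
  have hjensen : exp (-⨍ x in a..b, f x) ≤ (∫ x in a..b, exp (-f x)) / (b - a) := by
    rw [← average_neg, ← interval_average_eq_div]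
    exact convexOn_exp.map_intervalAverage_le continuous_exp hab.ne hf.neg hexp
  have hpos : 0 < ∫ x in a..b, exp (-f x) :=
    intervalIntegral_pos_of_pos_on hexp (fun x _ ↦ exp_pos _) hab
  rw [← le_log_iff_exp_le (div_pos hpos (sub_pos.mpr hab))] at hjensen
  rw [← inv_div, log_inv]
  linarith

theorem average_sq_dist_lower_bound_general
    (tl tu : ℝ) (htu : tl < tu) (d : ℝ → ℝ)
    (hd : ContinuousOn d (Icc tl tu))
    (βi βj : ℝ) (p0 : ℝ)
    (hp0 : p0 = Real.exp (-(∫ t in tl..tu, Real.exp (βi + βj - d t)))) :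
    Real.log ((tu - tl) / (-Real.log p0)) + βi + βj ≤
      (1 / (tu - tl)) * ∫ t in tl..tu, d t := by
  set I := ∫ t in tl..tu, exp (-d t)
  have hexp : IntervalIntegrable (fun t ↦ exp (-d t)) volume tl tu :=
    hd.neg.rexp.intervalIntegrable_of_Icc htu.le
  have hI : 0 < I := intervalIntegral_pos_of_pos_on hexp (fun t _ ↦ exp_pos _) htu
  have hlog_p0 : -log p0 = exp (βi + βj) * I := by
    rw [hp0, log_exp, neg_neg, ← intervalIntegral.integral_const_mul]
    simp_rw [← exp_add, ← sub_eq_add_neg]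
  have hbound := log_div_integral_exp_neg_le_intervalAverage htu
    (hd.intervalIntegrable_of_Icc htu.le) hexp
  rw [interval_average_eq, smul_eq_mul, ← one_div] at hbound
  rw [hlog_p0, div_mul_eq_div_div_swap, log_div (div_pos (sub_pos.mpr htu) hI).ne' (exp_pos _).ne', log_exp]
  linarith

/-- Lower bound on the average squared distance between two node trajectories in
terms of the probability `p⁰` of zero events of the inhomogeneous Poisson process
with intensity `exp (β_i + β_j - d t)`. -/
theorem average_sq_dist_lower_bound
    (tl tu : ℝ) (htu : tl < tu) (d : ℝ → ℝ)
    (hd : ContinuousOn d (Icc tl tu))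
    (hd0 : ∀ t ∈ Icc tl tu, 0 ≤ d t)
    (βi βj : ℝ) (p0 : ℝ)
    (hp0 : p0 = Real.exp (-(∫ t in tl..tu, Real.exp (βi + βj - d t))))
    (hp0pos : 0 < p0) (hp0lt : p0 < 1) :
    Real.log ((tu - tl) / (-Real.log p0)) + βi + βj ≤
      (1 / (tu - tl)) * ∫ t in tl..tu, d t :=
  average_sq_dist_lower_bound_general tl tu htu d hd βi βj p0 hp0
end

section
/- Let d : [t_l, t_u] → ℝ be continuous nonnegative and bounded above by R, let β_i, β_j ∈ ℝ, and let p^> = 1 - exp(-exp(β_i + β_j) ∫_{t_l}^{t_u} exp(-d(t)) dt) with 0 < p^> < 1. Then (1/(t_u - t_l)) ∫_{t_l}^{t_u} d(t) dt ≤ log((t_u - t_l)/(-log(1 - p^>))) + β_i + β_j + R. -/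
/-!
Write `T = tu - tl`, `I = ∫ exp (-d)` and `Λ = exp (βi + βj) * I` for the integrated intensity, so
that `pgt = 1 - exp (-Λ)` and `-log (1 - pgt) = Λ`. The right-hand side is then `log (T / I) + R`.
Since `0 ≤ d ≤ R`, the average of `d` is at most `R` and `0 < I ≤ T`, so `log (T / I) ≥ 0`.
-/

open Real MeasureTheory intervalIntegral Set

theorem intervalIntegral_le_mul_of_abs_le {f : ℝ → ℝ} {a b C : ℝ} (hab : a ≤ b)
    (h : ∀ t ∈ Ioc a b, |f t| ≤ C) : ∫ t in a..b, f t ≤ C * (b - a) := by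
  have hbound := norm_integral_le_of_norm_le_const (f := f) (C := C) (by rwa [uIoc_of_le hab])
  rw [abs_of_nonneg (sub_nonneg.2 hab)] at hbound
  exact (le_abs_self _).trans hbound

theorem average_le_of_abs_le {f : ℝ → ℝ} {a b C : ℝ} (hab : a < b)
    (h : ∀ t ∈ Ioc a b, |f t| ≤ C) : (1 / (b - a)) * ∫ t in a..b, f t ≤ C := by
  rw [one_div_mul_eq_div, div_le_iff₀ (sub_pos.2 hab)]
  exact intervalIntegral_le_mul_of_abs_le hab.le h

theorem intervalIntegral_exp_neg_le {d : ℝ → ℝ} {a b : ℝ} (hab : a ≤ b)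
    (hd0 : ∀ t ∈ Ioc a b, 0 ≤ d t) : ∫ t in a..b, exp (-d t) ≤ b - a := by
  simpa using intervalIntegral_le_mul_of_abs_le (C := 1) hab fun t ht => by
    rw [abs_of_pos (exp_pos _), exp_le_one_iff, neg_nonpos]
    exact hd0 t ht

theorem pos_of_one_sub_exp_neg_pos {Λ : ℝ} (h : 0 < 1 - exp (-Λ)) : 0 < Λ := by
  rwa [sub_pos, exp_lt_one_iff, neg_lt_zero] at h

theorem neg_log_one_sub_one_sub_exp_neg (Λ : ℝ) : -log (1 - (1 - exp (-Λ))) = Λ := by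
  rw [sub_sub_cancel, log_exp, neg_neg]

theorem average_sq_dist_upper_bound_general
    (tl tu : ℝ) (htu : tl < tu) (d : ℝ → ℝ)
    (hd0 : ∀ t ∈ Icc tl tu, 0 ≤ d t)
    (R : ℝ) (hdR : ∀ t ∈ Icc tl tu, d t ≤ R)
    (βi βj : ℝ) (pgt : ℝ)
    (hpgt : pgt = 1 - Real.exp (-(Real.exp (βi + βj) * ∫ t in tl..tu, Real.exp (-d t))))
    (hpos : 0 < pgt) :
    (1 / (tu - tl)) * ∫ t in tl..tu, d t ≤
      Real.log ((tu - tl) / (-Real.log (1 - pgt))) + βi + βj + R := by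
  have hIoc : Ioc tl tu ⊆ Icc tl tu := Ioc_subset_Icc_self
  set I := ∫ t in tl..tu, exp (-d t)
  have hIpos : 0 < I :=
    pos_of_mul_pos_right (pos_of_one_sub_exp_neg_pos (hpgt ▸ hpos)) (exp_pos _).le
  have hIle : I ≤ tu - tl := intervalIntegral_exp_neg_le htu.le fun t ht => hd0 t (hIoc ht)
  have hRHS : log ((tu - tl) / (-log (1 - pgt))) + βi + βj = log ((tu - tl) / I) := by
    rw [hpgt, neg_log_one_sub_one_sub_exp_neg, div_mul_eq_div_div_swap,
      log_div (by positivity) (exp_pos _).ne', log_exp]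
    ring
  have hlog_nonneg : 0 ≤ log ((tu - tl) / I) := log_nonneg ((one_le_div hIpos).2 hIle)
  have havg : (1 / (tu - tl)) * ∫ t in tl..tu, d t ≤ R := average_le_of_abs_le htu fun t ht =>
    (abs_of_nonneg (hd0 t (hIoc ht))).trans_le (hdR t (hIoc ht))
  linarith

/-- Upper bound on the average squared distance between two node trajectories
bounded by `R`, in terms of the probability `p^>` of at least one event of the
inhomogeneous Poisson process with intensity `exp (β_i + β_j - d t)`. -/
theorem average_sq_dist_upper_bound
    (tl tu : ℝ) (htu : tl < tu) (d : ℝ → ℝ)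
    (hd : ContinuousOn d (Icc tl tu))
    (hd0 : ∀ t ∈ Icc tl tu, 0 ≤ d t)
    (R : ℝ) (hdR : ∀ t ∈ Icc tl tu, d t ≤ R)
    (βi βj : ℝ) (pgt : ℝ)
    (hpgt : pgt = 1 - Real.exp (-(Real.exp (βi + βj) * ∫ t in tl..tu, Real.exp (-d t))))
    (hpos : 0 < pgt) (hlt : pgt < 1) :
    (1 / (tu - tl)) * ∫ t in tl..tu, d t ≤
      Real.log ((tu - tl) / (-Real.log (1 - pgt))) + βi + βj + R :=
  average_sq_dist_upper_bound_general tl tu htu d hd0 R hdR βi βj pgt hpgt hpos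
end
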